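/- Let H : 𝒬_o(Ω) → [0,∞] be a nonnegative set function with D̲_λ H ∈ L^1(O) for an open set O ⊂ Ω. Define G(Q) := H(Q) − ∫_Q D̲_λ H(y) dy for open cubes Q ⊂ O. Then D̲_λ G(x) = 0 for λ-almost every x ∈ O, namely at every x which is simultaneously a Lebesgue point of D̲_λ H and a point where the derivative of the measure D̲_λ H · λ equals D̲_λ H(x). -/

import Mathlib

open MeasureTheory Filter Set
open scoped ENNReal NNReal

noncomputable section

/-- `ℝ^d` as Euclidean space. -/
abbrev Euc (d : ℕ) := EuclideanSpace ℝ (Fin d)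

/-- `Q` is an (axis-parallel, nondegenerate) open cube in `ℝ^d`. -/
def IsOpenCube {d : ℕ} (Q : Set (Euc d)) : Prop :=
  ∃ (a : Euc d) (ρ : ℝ), 0 < ρ ∧ Q = {y | ∀ i, a i < y i ∧ y i < a i + ρ}

/-- Lower derivative of a set function `G` with respect to Lebesgue measure. -/
def lowerDeriv {d : ℕ} (Ω : Set (Euc d)) (G : Set (Euc d) → EReal) (x : Euc d) : EReal :=
  ⨆ (ρ : ℝ) (_ : 0 < ρ),
    ⨅ (Q : Set (Euc d)) (_ : IsOpenCube Q ∧ Q ⊆ Ω ∧ x ∈ Q ∧ Metric.diam Q ≤ ρ),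
      G Q * (((volume Q).toReal⁻¹ : ℝ) : EReal)

/-- Lower derivative of a nonnegative set function `H` with respect to Lebesgue measure. -/
def lowerDerivE {d : ℕ} (Ω : Set (Euc d)) (H : Set (Euc d) → ℝ≥0∞) (x : Euc d) : ℝ≥0∞ :=
  ⨆ (ρ : ℝ) (_ : 0 < ρ),
    ⨅ (Q : Set (Euc d)) (_ : IsOpenCube Q ∧ Q ⊆ Ω ∧ x ∈ Q ∧ Metric.diam Q ≤ ρ),
      H Q / volume Q

/-!
Both lower derivatives are liminfs along the filter of open cubes in `O` that contain `x` and
shrink to it. Closures of such cubes have bounded eccentricity, so they belong to a Vitali family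
for Lebesgue measure, and their boundaries are null; hence along this filter the averages of the
integrable function `f = D̲_λ H` converge to `f x` at almost every `x ∈ O`, where also `f x < ∞`.
At such a point `G(Q) / λ(Q)` is `H(Q) / λ(Q)` minus a term tending to the real number `f x`,
so its liminf is `D̲_λ H(x) - f x = 0`.
-/

open Metric Topology

theorem EReal.coe_ennreal_liminf {α : Type*} {l : Filter α} [l.NeBot] (u : α → ℝ≥0∞) :
    ((liminf u l : ℝ≥0∞) : EReal) = liminf (fun a => (u a : EReal)) l :=
  Monotone.map_liminf_of_continuousAt (fun _ _ h => EReal.coe_ennreal_le_coe_ennreal_iff.2 h) u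
    continuous_coe_ennreal_ereal.continuousAt

theorem EReal.liminf_add_of_tendsto {α : Type*} {l : Filter α} [l.NeBot] {u v : α → EReal}
    {b : ℝ} (hv : Tendsto v l (𝓝 b)) : liminf (fun a => u a + v a) l = liminf u l + b := by
  refine le_antisymm ?_ ?_
  · calc liminf (fun a => u a + v a) l = liminf (v + u) l := by simp only [Pi.add_def, add_comm]
      _ ≤ limsup v l + liminf u l :=
        EReal.liminf_add_le (.inl (by simp [hv.limsup_eq])) (.inl (by simp [hv.limsup_eq]))
      _ = liminf u l + b := by rw [hv.limsup_eq, add_comm]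
  · calc liminf u l + b = liminf u l + liminf v l := by rw [hv.liminf_eq]
      _ ≤ liminf (u + v) l := EReal.le_liminf_add

theorem EReal.coe_ennreal_sub_toReal_mul_inv {h i v : ℝ≥0∞} (hv₀ : v ≠ 0) (hv : v ≠ ⊤) :
    ((h : EReal) - (i.toReal : EReal)) * ((v.toReal⁻¹ : ℝ) : EReal) =
      ((h / v : ℝ≥0∞) : EReal) + -((i / v).toReal : EReal) := by
  rcases eq_or_ne h ⊤ with rfl | hh
  · rw [ENNReal.top_div_of_ne_top hv, EReal.coe_ennreal_top, EReal.top_sub_coe,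
      EReal.top_mul_of_pos (EReal.coe_pos.2 (inv_pos.2 (ENNReal.toReal_pos hv₀ hv))),
      ← EReal.coe_neg, EReal.top_add_coe]
  · rw [← EReal.coe_ennreal_toReal hh, ← EReal.coe_ennreal_toReal (ENNReal.div_ne_top hh hv₀),
      ENNReal.toReal_div, ENNReal.toReal_div, ← EReal.coe_sub, ← EReal.coe_mul, ← EReal.coe_neg,
      ← EReal.coe_add, EReal.coe_eq_coe_iff]
    ring

variable {d : ℕ}

def openCube (a : Euc d) (ρ : ℝ) : Set (Euc d) := {y | ∀ i, a i < y i ∧ y i < a i + ρ}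

theorem isOpenCube_openCube (a : Euc d) {ρ : ℝ} (hρ : 0 < ρ) : IsOpenCube (openCube a ρ) :=
  ⟨a, ρ, hρ, rfl⟩

theorem IsOpenCube.exists_eq_openCube {Q : Set (Euc d)} (hQ : IsOpenCube Q) :
    ∃ a ρ, 0 < ρ ∧ Q = openCube a ρ :=
  hQ

theorem openCube_eq_preimage (a : Euc d) (ρ : ℝ) :
    openCube a ρ = (WithLp.equiv 2 (Fin d → ℝ)) ⁻¹' univ.pi fun i => Ioo (a i) (a i + ρ) := by
  ext y
  simp [openCube, Set.mem_pi]

theorem isOpen_openCube (a : Euc d) (ρ : ℝ) : IsOpen (openCube a ρ) := by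
  rw [openCube_eq_preimage]
  exact (isOpen_set_pi finite_univ fun i _ => isOpen_Ioo).preimage (PiLp.continuous_ofLp 2 _)

theorem convex_openCube (a : Euc d) (ρ : ℝ) : Convex ℝ (openCube a ρ) := by
  rw [openCube_eq_preimage]
  exact (convex_pi fun i _ => convex_Ioo _ _).linear_preimage (WithLp.linearEquiv 2 ℝ _).toLinearMap

theorem volume_openCube (a : Euc d) (ρ : ℝ) : volume (openCube a ρ) = ENNReal.ofReal ρ ^ d := by
  rw [openCube_eq_preimage]
  change volume ((MeasurableEquiv.toLp 2 (Fin d → ℝ)).symm ⁻¹' _) = _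
  rw [(EuclideanSpace.volume_preserving_symm_measurableEquiv_toLp (Fin d)).measure_preimage
      (MeasurableSet.univ_pi fun i => measurableSet_Ioo).nullMeasurableSet,
    Real.volume_pi_Ioo]
  simp

theorem dist_le_of_mem_openCube {a : Euc d} {ρ : ℝ} (hρ : 0 ≤ ρ) {y z : Euc d}
    (hy : y ∈ openCube a ρ) (hz : z ∈ openCube a ρ) : dist y z ≤ ρ * √d := by
  have hcoord : ∀ i, dist (y i) (z i) ^ 2 ≤ ρ ^ 2 := fun i => by
    rw [Real.dist_eq, sq_abs]
    nlinarith [hy i, hz i]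
  calc dist y z = √(∑ i, dist (y i) (z i) ^ 2) := EuclideanSpace.dist_eq y z
    _ ≤ √(∑ _i : Fin d, ρ ^ 2) := Real.sqrt_le_sqrt (Finset.sum_le_sum fun i _ => hcoord i)
    _ = ρ * √d := by simp [Real.sqrt_sq hρ, mul_comm]

theorem diam_openCube_le (a : Euc d) {ρ : ℝ} (hρ : 0 ≤ ρ) : diam (openCube a ρ) ≤ ρ * √d :=
  diam_le_of_forall_dist_le (by positivity) fun _ hy _ hz => dist_le_of_mem_openCube hρ hy hz

theorem exists_openCube_subset_of_mem_nhds {O : Set (Euc d)} {x : Euc d} (hO : O ∈ 𝓝 x)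
    {δ : ℝ} (hδ : 0 < δ) : ∃ Q, IsOpenCube Q ∧ Q ⊆ O ∧ x ∈ Q ∧ diam Q ≤ δ := by
  obtain ⟨ε, hε, hball⟩ := Metric.mem_nhds_iff.1 hO
  set ρ := min δ ε / (√d + 1)
  have hρ : 0 < ρ := by positivity
  have hρd : ρ * √d < min δ ε := by
    rw [div_mul_eq_mul_div, div_lt_iff₀ (by positivity)]
    nlinarith [lt_min hδ hε, Real.sqrt_nonneg d]
  have hx : x ∈ openCube (WithLp.toLp 2 fun i => x i - ρ / 2) ρ := fun i => by
    constructor <;> simp <;> linarith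
  refine ⟨_, isOpenCube_openCube _ hρ, fun y hy => hball ?_, hx, ?_⟩
  · exact mem_ball.2
      ((dist_le_of_mem_openCube hρ.le hy hx).trans_lt (hρd.trans_le (min_le_right _ _)))
  · exact (diam_openCube_le _ hρ.le).trans (hρd.le.trans (min_le_left _ _))

theorem isBounded_openCube (a : Euc d) {ρ : ℝ} (hρ : 0 ≤ ρ) :
    Bornology.IsBounded (openCube a ρ) :=
  isBounded_iff.2 ⟨_, fun _ hy _ hz => dist_le_of_mem_openCube hρ hy hz⟩

def cubesAt (O : Set (Euc d)) (x : Euc d) (ρ : ℝ) : Set (Set (Euc d)) :=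
  {Q | IsOpenCube Q ∧ Q ⊆ O ∧ x ∈ Q ∧ diam Q ≤ ρ}

theorem cubesAt_mono (O : Set (Euc d)) (x : Euc d) {ρ ρ' : ℝ} (h : ρ ≤ ρ') :
    cubesAt O x ρ ⊆ cubesAt O x ρ' :=
  fun _ ⟨hQ, hQO, hxQ, hdiam⟩ => ⟨hQ, hQO, hxQ, hdiam.trans h⟩

def cubeFilter (O : Set (Euc d)) (x : Euc d) : Filter (Set (Euc d)) :=
  ⨅ ρ > 0, 𝓟 (cubesAt O x ρ)

theorem hasBasis_cubeFilter (O : Set (Euc d)) (x : Euc d) :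
    (cubeFilter O x).HasBasis (fun ρ : ℝ => 0 < ρ) (cubesAt O x) :=
  hasBasis_biInf_principal'
    (fun ρ hρ ρ' hρ' => ⟨min ρ ρ', lt_min hρ hρ', cubesAt_mono O x (min_le_left _ _),
      cubesAt_mono O x (min_le_right _ _)⟩) ⟨1, one_pos⟩

theorem cubeFilter_neBot {O : Set (Euc d)} {x : Euc d} (hO : O ∈ 𝓝 x) :
    (cubeFilter O x).NeBot :=
  (hasBasis_cubeFilter O x).neBot_iff.2 fun hρ => exists_openCube_subset_of_mem_nhds hO hρ

theorem lowerDeriv_eq_liminf (O : Set (Euc d)) (G : Set (Euc d) → EReal) (x : Euc d) :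
    lowerDeriv O G x =
      liminf (fun Q => G Q * (((volume Q).toReal⁻¹ : ℝ) : EReal)) (cubeFilter O x) :=
  (hasBasis_cubeFilter O x).liminf_eq_iSup_iInf.symm

theorem lowerDerivE_eq_liminf (O : Set (Euc d)) (H : Set (Euc d) → ℝ≥0∞) (x : Euc d) :
    lowerDerivE O H x = liminf (fun Q => H Q / volume Q) (cubeFilter O x) :=
  (hasBasis_cubeFilter O x).liminf_eq_iSup_iInf.symm

theorem upperSemicontinuous_iInf_cubesAt (O : Set (Euc d)) (H : Set (Euc d) → ℝ≥0∞) (ρ : ℝ) :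
    UpperSemicontinuous fun x => ⨅ Q ∈ cubesAt O x ρ, H Q / volume Q := by
  intro x t ht
  simp only [iInf_lt_iff] at ht
  obtain ⟨Q, ⟨⟨a, s, hs, rfl⟩, hQO, hxQ, hdiam⟩, hQt⟩ := ht
  filter_upwards [(isOpen_openCube a s).mem_nhds hxQ] with y hy
  have hQ : openCube a s ∈ cubesAt O y ρ := ⟨⟨a, s, hs, rfl⟩, hQO, hy, hdiam⟩
  exact (biInf_le (fun Q => H Q / volume Q) hQ).trans_lt hQt

theorem measurable_lowerDerivE (O : Set (Euc d)) (H : Set (Euc d) → ℝ≥0∞) :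
    Measurable (lowerDerivE O H) := by
  have h : lowerDerivE O H =
      fun x => ⨆ n : ℕ, ⨅ Q ∈ cubesAt O x (1 / (n + 1)), H Q / volume Q := by
    ext x
    -- the infimum at scale `ρ` is antitone in `ρ`, so the scales `1 / (n + 1)` suffice
    refine le_antisymm (iSup₂_le fun ρ hρ => ?_) (iSup_le fun n => ?_)
    · obtain ⟨n, hn⟩ := exists_nat_one_div_lt hρ
      exact le_iSup_of_le n (biInf_mono fun Q hQ => cubesAt_mono O x hn.le hQ)
    · exact le_iSup₂_of_le (1 / (n + 1) : ℝ) (by positivity) le_rfl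
  rw [h]
  exact .iSup fun n => (upperSemicontinuous_iInf_cubesAt O H _).measurable

variable (d) in
/-- The summand `3 ^ d` controls the doubling of balls, the other one the ratio between
`closedBall x (3 * ρ * √d)` and a closed cube of side `ρ` containing `x`. -/
def cubeVitaliConst : ℝ≥0 :=
  3 ^ d + ((3 * √d) ^ d).toNNReal * (volume (ball (0 : Euc d) 1)).toNNReal

theorem coe_cubeVitaliConst :
    (cubeVitaliConst d : ℝ≥0∞) =
      3 ^ d + ENNReal.ofReal ((3 * √d) ^ d) * volume (ball (0 : Euc d) 1) := by
  simp [cubeVitaliConst, ENNReal.ofReal, ENNReal.coe_toNNReal measure_ball_lt_top.ne]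

theorem volume_closedBall_eq (x : Euc d) {r : ℝ} (hr : 0 ≤ r) :
    volume (closedBall x r) = ENNReal.ofReal r ^ d * volume (ball (0 : Euc d) 1) := by
  rw [Measure.addHaar_closedBall volume x hr, finrank_euclideanSpace_fin, ENNReal.ofReal_pow hr]

theorem volume_closedBall_three_mul_le (x : Euc d) {r : ℝ} (hr : 0 ≤ r) :
    volume (closedBall x (3 * r)) ≤ cubeVitaliConst d * volume (closedBall x r) := by
  rw [volume_closedBall_eq x (by positivity), volume_closedBall_eq x hr,
    ENNReal.ofReal_mul (by norm_num), mul_pow, mul_assoc, coe_cubeVitaliConst]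
  gcongr
  exact (by norm_num : ENNReal.ofReal 3 ^ d = 3 ^ d).le.trans le_self_add

variable (d) in
def cubeVitaliFamily : VitaliFamily (volume : Measure (Euc d)) :=
  Vitali.vitaliFamily volume (cubeVitaliConst d) fun x =>
    (eventually_nhdsWithin_of_forall (s := Ioi 0) fun _ hr =>
      volume_closedBall_three_mul_le x (le_of_lt hr)).frequently

theorem volume_closure_openCube (a : Euc d) (ρ : ℝ) :
    volume (closure (openCube a ρ)) = volume (openCube a ρ) :=
  measure_closure_of_null_frontier ((convex_openCube a ρ).addHaar_frontier volume)

theorem closure_openCube_mem_setsAt {a : Euc d} {ρ : ℝ} (hρ : 0 < ρ) {x : Euc d}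
    (hx : x ∈ openCube a ρ) : closure (openCube a ρ) ∈ (cubeVitaliFamily d).setsAt x := by
  have hball : closure (openCube a ρ) ⊆ closedBall x (ρ * √d) :=
    closure_minimal (fun y hy => mem_closedBall.2 (dist_le_of_mem_openCube hρ.le hy hx))
      isClosed_closedBall
  have hinterior : openCube a ρ ⊆ interior (closure (openCube a ρ)) :=
    (isOpen_openCube a ρ).subset_interior_iff.2 subset_closure
  refine ⟨isClosed_closure, ⟨x, hinterior hx⟩, ρ * √d, hball, ?_⟩
  have hscale : ENNReal.ofReal (3 * (ρ * √d)) ^ d =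
      ENNReal.ofReal ((3 * √d) ^ d) * ENNReal.ofReal ρ ^ d := by
    rw [← ENNReal.ofReal_pow hρ.le, ← ENNReal.ofReal_mul (by positivity),
      ← ENNReal.ofReal_pow (by positivity)]
    ring_nf
  calc volume (closedBall x (3 * (ρ * √d)))
      = ENNReal.ofReal ((3 * √d) ^ d) * volume (ball (0 : Euc d) 1) * ENNReal.ofReal ρ ^ d := by
        rw [volume_closedBall_eq x (by positivity), hscale]; ring
    _ ≤ cubeVitaliConst d * volume (closure (openCube a ρ)) := by
        rw [volume_closure_openCube, volume_openCube, coe_cubeVitaliConst]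
        gcongr
        exact le_add_self

theorem tendsto_closure_cubeFilter (O : Set (Euc d)) (x : Euc d) :
    Tendsto closure (cubeFilter O x) ((cubeVitaliFamily d).filterAt x) := by
  refine (cubeVitaliFamily d).tendsto_filterAt_iff.2 ⟨?_, fun ε hε => ?_⟩
  · refine (hasBasis_cubeFilter O x).eventually_iff.2 ⟨1, one_pos, ?_⟩
    rintro _ ⟨⟨a, ρ, hρ, rfl⟩, -, hx, -⟩
    exact closure_openCube_mem_setsAt hρ hx
  · refine (hasBasis_cubeFilter O x).eventually_iff.2 ⟨ε, hε, ?_⟩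
    rintro _ ⟨⟨a, ρ, hρ, rfl⟩, -, hx, hdiam⟩
    refine closure_minimal (fun y hy => mem_closedBall.2 ?_) isClosed_closedBall
    exact (dist_le_diam_of_mem (isBounded_openCube a hρ.le) hy hx).trans hdiam

theorem ae_tendsto_setLIntegral_div_cubeFilter {O : Set (Euc d)} (hO : IsOpen O)
    {f : Euc d → ℝ≥0∞} (hf : AEMeasurable f (volume.restrict O)) (hint : ∫⁻ y in O, f y ≠ ⊤) :
    ∀ᵐ x ∂volume.restrict O,
      Tendsto (fun Q => (∫⁻ y in Q, f y) / volume Q) (cubeFilter O x) (𝓝 (f x)) := by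
  have hf' : AEMeasurable (O.indicator f) volume :=
    (aemeasurable_indicator_iff hO.measurableSet).2 hf
  have hint' : ∫⁻ y, O.indicator f y ≠ ⊤ := by rwa [lintegral_indicator hO.measurableSet]
  filter_upwards [ae_restrict_of_ae ((cubeVitaliFamily d).ae_tendsto_lintegral_div hf' hint'),
    ae_restrict_mem hO.measurableSet] with x hx hxO
  rw [indicator_of_mem hxO] at hx
  refine (hx.comp (tendsto_closure_cubeFilter O x)).congr'
    ((hasBasis_cubeFilter O x).eventually_iff.2 ⟨1, one_pos, ?_⟩)
  rintro Q ⟨hQ, hQO, -, -⟩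
  obtain ⟨a, ρ, -, rfl⟩ := hQ.exists_eq_openCube
  have hae := closure_ae_eq_of_null_frontier ((convex_openCube a ρ).addHaar_frontier volume)
  rw [Function.comp_apply, setLIntegral_congr hae, measure_congr hae,
    setLIntegral_indicator hO.measurableSet, inter_eq_right.2 hQO]

theorem lowerDeriv_sub_setLIntegral {O : Set (Euc d)} {x : Euc d} (hO : O ∈ 𝓝 x)
    (H : Set (Euc d) → ℝ≥0∞) {f : Euc d → ℝ≥0∞} {c : ℝ≥0∞}
    (hc : c ≠ ⊤) (hlim : Tendsto (fun Q => (∫⁻ y in Q, f y) / volume Q) (cubeFilter O x) (𝓝 c)) :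
    lowerDeriv O (fun Q => (H Q : EReal) - ((∫⁻ y in Q, f y).toReal : EReal)) x =
      (lowerDerivE O H x : EReal) - (c.toReal : EReal) := by
  have := cubeFilter_neBot hO
  have hsplit : ∀ᶠ Q in cubeFilter O x,
      ((H Q : EReal) - ((∫⁻ y in Q, f y).toReal : EReal)) * (((volume Q).toReal⁻¹ : ℝ) : EReal) =
        ((H Q / volume Q : ℝ≥0∞) : EReal) + -(((∫⁻ y in Q, f y) / volume Q).toReal : EReal) := by
    refine (hasBasis_cubeFilter O x).eventually_iff.2 ⟨1, one_pos, ?_⟩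
    rintro Q ⟨hQ, -, -, -⟩
    obtain ⟨a, ρ, hρ, rfl⟩ := hQ.exists_eq_openCube
    rw [volume_openCube]
    exact EReal.coe_ennreal_sub_toReal_mul_inv (pow_ne_zero d (ENNReal.ofReal_pos.2 hρ).ne')
      (ENNReal.pow_ne_top ENNReal.ofReal_ne_top)
  have hneg : Tendsto (fun Q => -(((∫⁻ y in Q, f y) / volume Q).toReal : EReal)) (cubeFilter O x)
      (𝓝 ((-c.toReal : ℝ) : EReal)) := by
    rw [EReal.coe_neg]
    exact (continuous_neg.tendsto _).comp
      ((continuous_coe_real_ereal.tendsto _).comp ((ENNReal.tendsto_toReal hc).comp hlim))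
  rw [lowerDeriv_eq_liminf, liminf_congr hsplit, EReal.liminf_add_of_tendsto hneg,
    lowerDerivE_eq_liminf, EReal.coe_ennreal_liminf, EReal.coe_neg, sub_eq_add_neg]

theorem lowerDeriv_sub_integral_lowerDeriv_eq_zero_general
    {d : ℕ} (O : Set (Euc d)) (hO : IsOpen O)
    (H : Set (Euc d) → ℝ≥0∞)
    (hint : ∫⁻ x in O, lowerDerivE O H x ∂volume < ⊤) :
    ∀ᵐ x ∂(volume.restrict O),
      lowerDeriv O (fun Q =>
          ((H Q : EReal)) -
            (((∫⁻ y in Q, lowerDerivE O H y ∂volume).toReal : ℝ) : EReal)) x = 0 := by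
  have hmeas := (measurable_lowerDerivE O H).aemeasurable (μ := volume.restrict O)
  filter_upwards [ae_tendsto_setLIntegral_div_cubeFilter hO hmeas hint.ne,
    ae_lt_top' hmeas hint.ne, ae_restrict_mem hO.measurableSet] with x hlim hfin hxO
  rw [lowerDeriv_sub_setLIntegral (hO.mem_nhds hxO) H hfin.ne hlim,
    ← EReal.coe_ennreal_toReal hfin.ne, ← EReal.coe_sub, sub_self, EReal.coe_zero]

/-- If `H ≥ 0` is a set function whose lower derivative is integrable on `O`, then the set
function `G(Q) = H(Q) − ∫_Q D̲_λ H dy` has vanishing lower derivative a.e. in `O`. -/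
theorem lowerDeriv_sub_integral_lowerDeriv_eq_zero
    {d : ℕ} (Ω O : Set (Euc d)) (hΩo : IsOpen Ω) (hΩb : Bornology.IsBounded Ω)
    (hΩne : Ω.Nonempty) (hO : IsOpen O) (hOΩ : O ⊆ Ω)
    (H : Set (Euc d) → ℝ≥0∞)
    (hint : ∫⁻ x in O, lowerDerivE O H x ∂volume < ⊤) :
    ∀ᵐ x ∂(volume.restrict O),
      lowerDeriv O (fun Q =>
          ((H Q : EReal)) -
            (((∫⁻ y in Q, lowerDerivE O H y ∂volume).toReal : ℝ) : EReal)) x = 0 :=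
  lowerDeriv_sub_integral_lowerDeriv_eq_zero_general O hO H hint
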